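/- Let Ẑ and Z be arbitrary complex L×L matrices and z ∈ ℂ. Then the geometric multiplicity of z as an eigenvalue of H^N_{Ẑ,Z} equals the dimension of the intersection of the column span of the 2L×L matrix 𝒯^z(N,0)·(1; −Ẑ) with the column span of the 2L×L matrix (−Z; 1); that is, dim_ℂ ker(H^N_{Ẑ,Z} − z·1) = dim_ℂ ( range(𝒯^z(N,0)(1; −Ẑ)) ∩ range((−Z; 1)) ) as subspaces of ℂ^{2L}. -/

import Mathlib

open MeasureTheory Matrix
open scoped ComplexOrder

noncomputable section

/-- The space of complex `L × L` matrices. -/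
abbrev Mat (L : ℕ) := Matrix (Fin L) (Fin L) ℂ

/-- The `2L × 2L` transfer matrix `[[(z − V)T⁻¹, −T^*], [T⁻¹, 0]]`. -/
def transferM (L : ℕ) (z : ℂ) (T V : Mat L) : Matrix (Fin L ⊕ Fin L) (Fin L ⊕ Fin L) ℂ :=
  Matrix.fromBlocks ((z • (1 : Mat L) - V) * T⁻¹) (-(Tᴴ)) T⁻¹ 0

/-- The transfer matrix across the sample, `𝒯^z(N,0) = 𝒯_N^z ⋯ 𝒯_1^z`. -/
def transferProd (L N : ℕ) (T V : ℕ → Mat L) (z : ℂ) :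
    Matrix (Fin L ⊕ Fin L) (Fin L ⊕ Fin L) ℂ :=
  (((List.range N).map (fun n => transferM L z (T (n + 1)) (V (n + 1)))).reverse).prod

/-- The block tridiagonal Jacobi matrix `H^N_{Ẑ,Z}` (sites `1,…,N` are indexed by `Fin N`). -/
def jacobi (L N : ℕ) (T V : ℕ → Mat L) (Zh Z : Mat L) :
    Matrix (Fin N × Fin L) (Fin N × Fin L) ℂ :=
  Matrix.of fun p q =>
    if p.1 = q.1 then
      (V (p.1.val + 1) - (if p.1.val = 0 then Zh else 0)
        - (if p.1.val = N - 1 then Z else 0)) p.2 q.2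
    else if q.1.val = p.1.val + 1 then T (p.1.val + 2) p.2 q.2
    else if p.1.val = q.1.val + 1 then (T (q.1.val + 2))ᴴ p.2 q.2
    else 0


/-!
A vector `w` in the kernel of `H^N_{Ẑ,Z} - z` is a solution `ψ_n = w_n` of the three-term
recurrence `T_{n+1} ψ_{n+1} + (V_n - z) ψ_n + T_n^* ψ_{n-1} = 0` on sites `1, …, N`, where the
boundary blocks `Ẑ`, `Z` are absorbed into the fictitious values `ψ_0 = -Ẑ ψ_1` and
`ψ_{N+1} = -Z ψ_N`. The transfer matrices propagate `(T_{n+1} ψ_{n+1}, ψ_n)`, so every solution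
is determined by `ψ_1 = x` and the rows at sites `1, …, N - 1` hold automatically for the
solution started at `(x, -Ẑ x)`; the last row holds exactly when `𝒯^z(N,0) (x, -Ẑ x)` lies in the
range of `(-Z; 1)`. Hence `x ↦ ψ` is an isomorphism from the preimage of that range onto the
kernel, and `𝒯^z(N,0) (1; -Ẑ)` is injective, so both dimensions agree.
-/

section FromRows

variable {m n R : Type*} [Fintype n] [DecidableEq n] [CommSemiring R]

lemma mem_range_fromRows_one_iff (B : Matrix m n R) (u : m ⊕ n → R) :
    u ∈ LinearMap.range (fromRows B 1).mulVecLin ↔ u ∘ Sum.inl = B *ᵥ (u ∘ Sum.inr) := by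
  constructor
  · rintro ⟨y, rfl⟩
    simp
  · intro h
    refine ⟨u ∘ Sum.inr, ?_⟩
    rw [mulVecLin_apply, fromRows_mulVec, one_mulVec, ← h, Sum.elim_comp_inl_inr]

lemma fromRows_one_mulVec_injective (B : Matrix m n R) :
    Function.Injective (fromRows (1 : Matrix n n R) B *ᵥ ·) := by
  intro x y h
  simpa using congrArg (· ∘ Sum.inl) h

end FromRows

variable {L : ℕ}

lemma transferM_mulVec (z : ℂ) (T V : Mat L) (u : Fin L ⊕ Fin L → ℂ) :
    transferM L z T V *ᵥ u =
      Sum.elim (((z • 1 - V) * T⁻¹) *ᵥ (u ∘ Sum.inl) - Tᴴ *ᵥ (u ∘ Sum.inr))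
        (T⁻¹ *ᵥ (u ∘ Sum.inl)) := by
  simp [transferM, fromBlocks_mulVec, sub_eq_add_neg, neg_mulVec]

lemma transferM_mulVec_injective (z : ℂ) {T : Mat L} (hT : IsUnit T) (V : Mat L) :
    Function.Injective (transferM L z T V *ᵥ ·) := by
  intro u v huv
  simp only [transferM_mulVec, Sum.elim_eq_iff] at huv
  have hl : u ∘ Sum.inl = v ∘ Sum.inl :=
    mulVec_injective_iff_isUnit.mpr (isUnit_nonsing_inv_iff.mpr hT) huv.2
  rw [hl, sub_right_inj] at huv
  have hr : u ∘ Sum.inr = v ∘ Sum.inr :=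
    mulVec_injective_iff_isUnit.mpr ((isUnit_conjTranspose T).mpr hT) huv.1
  rw [← Sum.elim_comp_inl_inr u, ← Sum.elim_comp_inl_inr v, hl, hr]

section Transfer

variable (T V : ℕ → Mat L) (Zh : Mat L) (z : ℂ)

lemma transferProd_zero : transferProd L 0 T V z = 1 := rfl

lemma transferProd_succ (n : ℕ) :
    transferProd L (n + 1) T V z =
      transferM L z (T (n + 1)) (V (n + 1)) * transferProd L n T V z := by
  simp [transferProd, List.range_succ]

lemma transferProd_mulVec_injective {N : ℕ} (hT : ∀ n, 1 ≤ n → n ≤ N → IsUnit (T n)) :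
    Function.Injective (transferProd L N T V z *ᵥ ·) := by
  induction N with
  | zero => intro u v h; simpa [transferProd_zero] using h
  | succ N ih =>
    simp only [transferProd_succ, ← mulVec_mulVec]
    exact (transferM_mulVec_injective z (hT (N + 1) (by omega) le_rfl) _).comp
      (ih fun n h₁ h₂ => hT n h₁ (by omega))

/-- `transferMap n x = (T_{n+1} ψ_{n+1}, ψ_n)`, where `ψ = transferSol x` is the solution of the
recurrence with `ψ_1 = x`, `ψ_0 = -Ẑ x`. -/
def transferMap (n : ℕ) : (Fin L → ℂ) →ₗ[ℂ] (Fin L ⊕ Fin L → ℂ) :=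
  (transferProd L n T V z).mulVecLin ∘ₗ (fromRows 1 (-Zh)).mulVecLin

def transferSol (x : Fin L → ℂ) (n : ℕ) : Fin L → ℂ :=
  transferMap T V Zh z n x ∘ Sum.inr

lemma transferMap_zero (x : Fin L → ℂ) :
    transferMap T V Zh z 0 x = Sum.elim x (-Zh *ᵥ x) := by
  simp [transferMap, transferProd_zero]

lemma transferMap_succ (x : Fin L → ℂ) (n : ℕ) :
    transferMap T V Zh z (n + 1) x =
      transferM L z (T (n + 1)) (V (n + 1)) *ᵥ transferMap T V Zh z n x := by
  simp [transferMap, transferProd_succ, mulVec_mulVec]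

lemma transferMap_injective {N : ℕ} (hT1 : T 1 = 1)
    (hT : ∀ n, 2 ≤ n → n ≤ N → IsUnit (T n)) :
    Function.Injective (transferMap T V Zh z N) := by
  have hT' : ∀ n, 1 ≤ n → n ≤ N → IsUnit (T n) := fun n h₁ h₂ => by
    obtain rfl | h₁ := h₁.eq_or_lt
    · exact hT1 ▸ isUnit_one
    · exact hT n h₁ h₂
  exact (transferProd_mulVec_injective T V z hT').comp (fromRows_one_mulVec_injective _)

lemma transferSol_zero (x : Fin L → ℂ) : transferSol T V Zh z x 0 = -Zh *ᵥ x := by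
  simp [transferSol, transferMap_zero]

lemma transferSol_succ (x : Fin L → ℂ) (n : ℕ) :
    transferSol T V Zh z x (n + 1) =
      (T (n + 1))⁻¹ *ᵥ (transferMap T V Zh z n x ∘ Sum.inl) := by
  simp [transferSol, transferMap_succ, transferM_mulVec]

lemma transferSol_one {T : ℕ → Mat L} (hT1 : T 1 = 1) (x : Fin L → ℂ) :
    transferSol T V Zh z x 1 = x := by
  simp [transferSol_succ, hT1, transferMap_zero]

lemma mulVec_transferSol_succ {n : ℕ} (hT : IsUnit (T (n + 1))) (x : Fin L → ℂ) :
    T (n + 1) *ᵥ transferSol T V Zh z x (n + 1) = transferMap T V Zh z n x ∘ Sum.inl := by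
  rw [transferSol_succ, mulVec_mulVec, mul_nonsing_inv _ ((isUnit_iff_isUnit_det _).mp hT),
    one_mulVec]

lemma transferMap_succ_inl (x : Fin L → ℂ) (n : ℕ) :
    transferMap T V Zh z (n + 1) x ∘ Sum.inl =
      (z • 1 - V (n + 1)) *ᵥ transferSol T V Zh z x (n + 1)
        - (T (n + 1))ᴴ *ᵥ transferSol T V Zh z x n := by
  simp [transferMap_succ, transferM_mulVec, mulVec_mulVec, transferSol]

end Transfer

section Sites

variable {N : ℕ}

/-- The block of `w` at site `n`, with sites numbered `1, …, N` as in the paper and the value `0`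
at the sites `0` and `n > N` outside the sample. -/
def siteBlock (w : Fin N × Fin L → ℂ) (n : ℕ) : Fin L → ℂ :=
  if h : n ≠ 0 ∧ n ≤ N then fun l => w (⟨n - 1, by omega⟩, l) else 0

lemma siteBlock_zero (w : Fin N × Fin L → ℂ) : siteBlock w 0 = 0 := by
  simp [siteBlock]

lemma siteBlock_of_lt (w : Fin N × Fin L → ℂ) {n : ℕ} (hn : N < n) : siteBlock w n = 0 := by
  simp [siteBlock, hn]

lemma siteBlock_succ (w : Fin N × Fin L → ℂ) (p : Fin N) :
    siteBlock w (p + 1) = fun l => w (p, l) := by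
  simp [siteBlock]

lemma siteBlock_eq_sum (w : Fin N × Fin L → ℂ) (n : ℕ) :
    siteBlock w n = ∑ q : Fin N, if (q : ℕ) + 1 = n then fun l => w (q, l) else 0 := by
  unfold siteBlock
  split_ifs with h
  · rw [Finset.sum_eq_single_of_mem ⟨n - 1, by omega⟩ (Finset.mem_univ _),
      if_pos (Nat.sub_add_cancel (Nat.one_le_iff_ne_zero.mpr h.1))]
    intro q _ hq
    refine if_neg fun h' => hq (Fin.ext (show (q : ℕ) = n - 1 by omega))
  · refine (Finset.sum_eq_zero fun q _ => if_neg ?_).symm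
    omega

variable (T V : ℕ → Mat L) (Zh Z : Mat L) (z : ℂ)

lemma jacobi_mulVec_apply (w : Fin N × Fin L → ℂ) (p : Fin N) :
    (fun l => (jacobi L N T V Zh Z *ᵥ w) (p, l)) =
      T (p + 2) *ᵥ siteBlock w (p + 2)
        + (V (p + 1) - (if p.val = 0 then Zh else 0) - (if p.val = N - 1 then Z else 0))
            *ᵥ siteBlock w (p + 1)
        + (T (p + 1))ᴴ *ᵥ siteBlock w p := by
  ext l
  simp only [siteBlock_eq_sum, mulVec_sum, ← Finset.sum_add_distrib, Finset.sum_apply]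
  rw [mulVec, dotProduct, Fintype.sum_prod_type]
  refine Finset.sum_congr rfl fun q _ => ?_
  obtain h | h | h | ⟨h₁, h₂, h₃⟩ : (q : ℕ) = p ∨ (q : ℕ) = p + 1 ∨ (q : ℕ) + 1 = p ∨
      ((q : ℕ) ≠ p ∧ (q : ℕ) ≠ p + 1 ∧ (q : ℕ) + 1 ≠ p) := by omega
  · obtain rfl := Fin.ext h
    simp [jacobi, mulVec, dotProduct]
  · simp [jacobi, mulVec, dotProduct, Fin.ext_iff, h, show (p : ℕ) + 1 + 1 ≠ p by omega]
  · simp [jacobi, mulVec, dotProduct, Fin.ext_iff, ← h, show (q : ℕ) ≠ q + 1 + 1 by omega]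
  · simp [jacobi, Fin.ext_iff, h₁, h₂, h₃, Ne.symm h₁, Ne.symm h₃]

lemma jacobi_sub_smul_mulVec_apply (w : Fin N × Fin L → ℂ) (p : Fin N) :
    (fun l => ((jacobi L N T V Zh Z - z • 1) *ᵥ w) (p, l)) =
      T (p + 2) *ᵥ siteBlock w (p + 2)
        + (V (p + 1) - (if p.val = 0 then Zh else 0) - (if p.val = N - 1 then Z else 0) - z • 1)
            *ᵥ siteBlock w (p + 1)
        + (T (p + 1))ᴴ *ᵥ siteBlock w p := by
  ext l
  have := congrFun (jacobi_mulVec_apply T V Zh Z w p) l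
  simp only [Pi.add_apply] at this
  simp only [sub_mulVec, Pi.sub_apply, this, smul_mulVec, one_mulVec, Pi.add_apply,
    siteBlock_succ, Pi.smul_apply]
  abel

lemma eq_zero_of_jacobi_sub_smul_rows_eq_zero (hT : ∀ n, 2 ≤ n → n ≤ N → IsUnit (T n))
    {w : Fin N × Fin L → ℂ} (h₁ : siteBlock w 1 = 0)
    (hrows : ∀ p : Fin N, (p : ℕ) + 1 < N →
      (fun l => ((jacobi L N T V Zh Z - z • 1) *ᵥ w) (p, l)) = 0) :
    w = 0 := by
  have key : ∀ n, siteBlock w n = 0 ∧ siteBlock w (n + 1) = 0 := by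
    intro n
    induction n with
    | zero => exact ⟨siteBlock_zero w, h₁⟩
    | succ n ih =>
      refine ⟨ih.2, ?_⟩
      by_cases hn : n + 2 ≤ N
      · have hrow := hrows ⟨n, by omega⟩ (show n + 1 < N by omega)
        rw [jacobi_sub_smul_mulVec_apply, ih.1, ih.2, mulVec_zero, mulVec_zero, add_zero,
          add_zero] at hrow
        exact mulVec_injective_iff_isUnit.mpr (hT (n + 2) le_add_self hn)
          (hrow.trans (mulVec_zero _).symm)
      · exact siteBlock_of_lt w (by omega)
  ext ⟨p, l⟩
  simpa [siteBlock_succ] using congrFun (key p).2 l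

end Sites

section Solution

variable (T V : ℕ → Mat L) (Zh Z : Mat L) (z : ℂ)

def solutionMap (N : ℕ) : (Fin L → ℂ) →ₗ[ℂ] (Fin N × Fin L → ℂ) :=
  LinearMap.pi fun pl => LinearMap.proj (Sum.inr pl.2) ∘ₗ transferMap T V Zh z (pl.1 + 1)

variable {N : ℕ}

lemma solutionMap_apply (x : Fin L → ℂ) (p : Fin N) (l : Fin L) :
    solutionMap T V Zh z N x (p, l) = transferSol T V Zh z x (p + 1) l := rfl

lemma siteBlock_solutionMap (x : Fin L → ℂ) (n : ℕ) :
    siteBlock (solutionMap T V Zh z N x) n =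
      if n ≠ 0 ∧ n ≤ N then transferSol T V Zh z x n else 0 := by
  unfold siteBlock
  split_ifs with h
  · ext l
    rw [solutionMap_apply, Nat.sub_add_cancel (Nat.one_le_iff_ne_zero.mpr h.1)]
  · rfl

lemma jacobi_sub_smul_mulVec_solutionMap (hT1 : T 1 = 1)
    (hT : ∀ n, 2 ≤ n → n ≤ N → IsUnit (T n)) (x : Fin L → ℂ) (p : Fin N) :
    (fun l => ((jacobi L N T V Zh Z - z • 1) *ᵥ solutionMap T V Zh z N x) (p, l)) =
      if (p : ℕ) + 1 = N then
        -(transferMap T V Zh z (p + 1) x ∘ Sum.inl + Z *ᵥ transferSol T V Zh z x (p + 1))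
      else 0 := by
  have hup : T (p + 2) *ᵥ siteBlock (solutionMap T V Zh z N x) (p + 2) =
      if (p : ℕ) + 1 = N then 0 else transferMap T V Zh z (p + 1) x ∘ Sum.inl := by
    rw [siteBlock_solutionMap]
    split_ifs with h₁ h₂ h₂
    · omega
    · exact mulVec_transferSol_succ T V Zh z (hT (p + 2) le_add_self h₁.2) x
    · exact mulVec_zero _
    · omega
  have hdown : (T (p + 1))ᴴ *ᵥ siteBlock (solutionMap T V Zh z N x) p
      - (if (p : ℕ) = 0 then Zh else 0) *ᵥ transferSol T V Zh z x (p + 1) =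
        (T (p + 1))ᴴ *ᵥ transferSol T V Zh z x p := by
    rw [siteBlock_solutionMap]
    by_cases hp : (p : ℕ) = 0
    · simp [hp, hT1, transferSol_zero, transferSol_one V Zh z hT1, neg_mulVec]
    · simp [hp, p.isLt.le]
  have hdiag :
      (V (p + 1) - (if (p : ℕ) = 0 then Zh else 0) - z • 1) *ᵥ transferSol T V Zh z x (p + 1)
        + (T (p + 1))ᴴ *ᵥ siteBlock (solutionMap T V Zh z N x) p =
        -(transferMap T V Zh z (p + 1) x ∘ Sum.inl) := by
    rw [transferMap_succ_inl, ← hdown]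
    simp only [sub_mulVec, smul_mulVec, one_mulVec]
    abel
  have hlast : ((p : ℕ) = N - 1) ↔ ((p : ℕ) + 1 = N) := by omega
  rw [jacobi_sub_smul_mulVec_apply, hup, siteBlock_succ]
  simp only [solutionMap_apply, hlast, sub_mulVec] at hdiag ⊢
  by_cases h : (p : ℕ) + 1 = N
  · simp only [if_pos h, zero_add]
    linear_combination (norm := module) hdiag
  · simp only [if_neg h, zero_mulVec, sub_zero]
    linear_combination (norm := module) hdiag

lemma solutionMap_mem_ker_iff (hN : 0 < N) (hT1 : T 1 = 1)
    (hT : ∀ n, 2 ≤ n → n ≤ N → IsUnit (T n)) (x : Fin L → ℂ) :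
    solutionMap T V Zh z N x ∈ LinearMap.ker (jacobi L N T V Zh Z - z • 1).mulVecLin ↔
      transferMap T V Zh z N x ∈ LinearMap.range (fromRows (-Z) (1 : Mat L)).mulVecLin := by
  rw [LinearMap.mem_ker, mulVecLin_apply, mem_range_fromRows_one_iff, neg_mulVec,
    eq_neg_iff_add_eq_zero]
  constructor
  · intro h
    have hrow := jacobi_sub_smul_mulVec_solutionMap T V Zh Z z hT1 hT x ⟨N - 1, by omega⟩
    simp only [Nat.sub_add_cancel hN, if_true, h] at hrow
    exact neg_eq_zero.mp hrow.symm
  · intro h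
    ext ⟨p, l⟩
    have hrow := congrFun (jacobi_sub_smul_mulVec_solutionMap T V Zh Z z hT1 hT x p) l
    split_ifs at hrow with hp
    · rw [hp] at hrow; simpa [transferSol, h] using hrow
    · exact hrow

lemma eq_solutionMap_of_mem_ker (hN : 0 < N) (hT1 : T 1 = 1)
    (hT : ∀ n, 2 ≤ n → n ≤ N → IsUnit (T n)) {w : Fin N × Fin L → ℂ}
    (hw : w ∈ LinearMap.ker (jacobi L N T V Zh Z - z • 1).mulVecLin) :
    w = solutionMap T V Zh z N (fun l => w (⟨0, hN⟩, l)) := by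
  rw [← sub_eq_zero]
  refine eq_zero_of_jacobi_sub_smul_rows_eq_zero T V Zh Z z hT ?_ fun p hp => ?_
  · ext l
    simp [siteBlock, Nat.one_le_of_lt hN, solutionMap_apply, transferSol_one V Zh z hT1]
  · have hrow :=
      jacobi_sub_smul_mulVec_solutionMap T V Zh Z z hT1 hT (fun l => w (⟨0, hN⟩, l)) p
    rw [if_neg hp.ne] at hrow
    have hw' : (jacobi L N T V Zh Z - z • 1) *ᵥ w = 0 := hw
    rw [mulVec_sub, hw', zero_sub]
    ext l
    simpa using congrFun hrow l

lemma ker_jacobi_sub_smul_eq_map (hN : 0 < N) (hT1 : T 1 = 1)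
    (hT : ∀ n, 2 ≤ n → n ≤ N → IsUnit (T n)) :
    LinearMap.ker (jacobi L N T V Zh Z - z • 1).mulVecLin =
      ((LinearMap.range (fromRows (-Z) (1 : Mat L)).mulVecLin).comap
        (transferMap T V Zh z N)).map (solutionMap T V Zh z N) := by
  ext w
  constructor
  · intro hw
    refine ⟨_, ?_, (eq_solutionMap_of_mem_ker T V Zh Z z hN hT1 hT hw).symm⟩
    rw [SetLike.mem_coe, Submodule.mem_comap, ← solutionMap_mem_ker_iff T V Zh Z z hN hT1 hT]
    rwa [← eq_solutionMap_of_mem_ker T V Zh Z z hN hT1 hT hw]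
  · rintro ⟨x, hx, rfl⟩
    exact (solutionMap_mem_ker_iff T V Zh Z z hN hT1 hT x).mpr hx

lemma solutionMap_injective (hN : 0 < N) (hT1 : T 1 = 1) :
    Function.Injective (solutionMap T V Zh z N) := by
  intro x y h
  ext l
  simpa [solutionMap_apply, transferSol_one V Zh z hT1] using congrFun h (⟨0, hN⟩, l)

end Solution

theorem stmt19_general (L N : ℕ) (hN : 1 ≤ N)
    (T V : ℕ → Mat L) (hT1 : T 1 = 1)
    (hTinv : ∀ n, 2 ≤ n → n ≤ N → IsUnit (T n))
    (Zh Z : Mat L) (z : ℂ) :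
    Module.finrank ℂ
        (LinearMap.ker (jacobi L N T V Zh Z - z • 1).mulVecLin) =
      Module.finrank ℂ
        ↥(LinearMap.range (transferProd L N T V z * Matrix.fromRows 1 (-Zh)).mulVecLin ⊓
          LinearMap.range (Matrix.fromRows (-Z) (1 : Mat L)).mulVecLin) := by
  have hA : (transferProd L N T V z * Matrix.fromRows 1 (-Zh)).mulVecLin =
      transferMap T V Zh z N :=
    LinearMap.ext fun x => (mulVec_mulVec x (transferProd L N T V z) (fromRows 1 (-Zh))).symm
  rw [hA, ← Submodule.map_comap_eq, ker_jacobi_sub_smul_eq_map T V Zh Z z hN hT1 hTinv,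
    ← (Submodule.equivMapOfInjective _ (solutionMap_injective T V Zh z hN hT1) _).finrank_eq,
    ← (Submodule.equivMapOfInjective _ (transferMap_injective T V Zh z hT1 hTinv) _).finrank_eq]

theorem stmt19 (L N : ℕ) (hL : 1 ≤ L) (hN : 1 ≤ N)
    (T V : ℕ → Mat L) (hT1 : T 1 = 1)
    (hTinv : ∀ n, 2 ≤ n → n ≤ N → IsUnit (T n))
    (hV : ∀ n, 1 ≤ n → n ≤ N → (V n).IsHermitian)
    (Zh Z : Mat L) (z : ℂ) :
    Module.finrank ℂ
        (LinearMap.ker (jacobi L N T V Zh Z - z • 1).mulVecLin) =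
      Module.finrank ℂ
        ↥(LinearMap.range (transferProd L N T V z * Matrix.fromRows 1 (-Zh)).mulVecLin ⊓
          LinearMap.range (Matrix.fromRows (-Z) (1 : Mat L)).mulVecLin) :=
  stmt19_general L N hN T V hT1 hTinv Zh Z z
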